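/- For the half-t prior λ ~ HalfT(ν, 0, 1) with ν > 1, the induced density of κ = 1/(1+λ²) on (0,1) is proportional to κ^{(ν−2)/2} (1−κ)^{-1/2} (κ + (1−κ)/ν)^{-(ν+1)/2}; in particular, for ν > 2 this density vanishes at κ = 0 while remaining unbounded at κ = 1. -/

import Mathlib

open Real MeasureTheory Filter Set

/-- Half-t density with `ν` degrees of freedom and scale 1 on `(0,∞)`. -/
noncomputable def halfTPdf (ν l : ℝ) : ℝ :=
  2 * (Real.Gamma ((ν + 1) / 2) / (Real.Gamma (ν / 2) * Real.sqrt (ν * Real.pi))) *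
    (1 + l ^ 2 / ν) ^ (-(ν + 1) / 2)

/-- Density of the shrinkage factor `κ = 1/(1+λ²)` induced by `λ ~ HalfT(ν,0,1)`,
obtained by change of variables `λ = √((1−κ)/κ)`. -/
noncomputable def kappaPdf (ν k : ℝ) : ℝ :=
  halfTPdf ν (Real.sqrt ((1 - k) / k)) *
    ((1 / 2) * k ^ (-(3 : ℝ) / 2) * (1 - k) ^ (-(1 : ℝ) / 2))

lemma key (ν : ℝ) (hν : 1 < ν) (k : ℝ) (hk : k ∈ Ioo (0:ℝ) 1) :
    kappaPdf ν k =
      (Real.Gamma ((ν + 1) / 2) / (Real.Gamma (ν / 2) * Real.sqrt (ν * Real.pi)))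
        * k ^ ((ν - 2) / 2) * (1 - k) ^ (-(1 : ℝ) / 2) *
          (k + (1 - k) / ν) ^ (-(ν + 1) / 2) := by
  obtain ⟨hk0, hk1⟩ := hk
  have hν0 : 0 < ν := by linarith
  have h1k : 0 < 1 - k := by linarith
  have hsq : (Real.sqrt ((1 - k) / k)) ^ 2 = (1 - k) / k :=
    Real.sq_sqrt (by positivity)
  have hX : 0 < k + (1 - k) / ν := by positivity
  unfold kappaPdf halfTPdf
  rw [hsq]
  have h2 : 1 + ((1 - k) / k) / ν = (k + (1 - k) / ν) / k := by
    rw [eq_div_iff hk0.ne']; field_simp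
  rw [h2, Real.div_rpow hX.le hk0.le]
  have h3 : k ^ ((ν - 2) / 2) = k ^ (-(3:ℝ)/2) / k ^ (-(ν + 1) / 2) := by
    rw [← Real.rpow_sub hk0]; ring_nf
  rw [h3]
  have hne : k ^ (-(ν + 1) / 2) ≠ 0 := (Real.rpow_pos_of_pos hk0 _).ne'
  field_simp

theorem stmt16 (ν : ℝ) (hν : 1 < ν) :
    (∃ c : ℝ, 0 < c ∧ ∀ k ∈ Ioo (0 : ℝ) 1,
      kappaPdf ν k =
        c * k ^ ((ν - 2) / 2) * (1 - k) ^ (-(1 : ℝ) / 2) *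
          (k + (1 - k) / ν) ^ (-(ν + 1) / 2)) ∧
    (2 < ν →
      Tendsto (fun k => kappaPdf ν k) (nhdsWithin 0 (Ioo (0 : ℝ) 1)) (nhds 0) ∧
      Tendsto (fun k => kappaPdf ν k) (nhdsWithin 1 (Ioo (0 : ℝ) 1)) atTop) := by
  have hν0 : 0 < ν := by linarith
  set C := Real.Gamma ((ν + 1) / 2) / (Real.Gamma (ν / 2) * Real.sqrt (ν * Real.pi)) with hC
  have hCpos : 0 < C := by
    apply div_pos (Real.Gamma_pos_of_pos (by linarith))
    exact mul_pos (Real.Gamma_pos_of_pos (by linarith))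
      (Real.sqrt_pos.2 (by positivity))
  refine ⟨⟨C, hCpos, fun k hk => key ν hν k hk⟩, fun hν2 => ?_⟩
  have heq : ∀ᶠ k in nhdsWithin (0:ℝ) (Ioo (0:ℝ) 1), kappaPdf ν k =
      C * k ^ ((ν - 2) / 2) * (1 - k) ^ (-(1 : ℝ) / 2) *
        (k + (1 - k) / ν) ^ (-(ν + 1) / 2) :=
    eventually_mem_nhdsWithin.mono (fun k hk => key ν hν k hk)
  have heq1 : ∀ᶠ k in nhdsWithin (1:ℝ) (Ioo (0:ℝ) 1), kappaPdf ν k =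
      C * k ^ ((ν - 2) / 2) * (1 - k) ^ (-(1 : ℝ) / 2) *
        (k + (1 - k) / ν) ^ (-(ν + 1) / 2) :=
    eventually_mem_nhdsWithin.mono (fun k hk => key ν hν k hk)
  have ha : 0 < (ν - 2) / 2 := by linarith
  constructor
  · refine Tendsto.congr' (heq.mono fun _ h => h.symm) ?_
    have t1 : Tendsto (fun k : ℝ => k ^ ((ν - 2) / 2)) (nhdsWithin 0 (Ioo (0:ℝ) 1)) (nhds 0) := by
      have := (Real.continuousAt_rpow_const 0 ((ν - 2) / 2) (Or.inr ha.le)).tendsto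
      rw [Real.zero_rpow ha.ne'] at this
      exact this.mono_left nhdsWithin_le_nhds
    have t2 : Tendsto (fun k : ℝ => (1 - k) ^ (-(1:ℝ) / 2)) (nhdsWithin 0 (Ioo (0:ℝ) 1))
        (nhds ((1:ℝ) ^ (-(1:ℝ)/2))) := by
      have : ContinuousAt (fun k : ℝ => (1 - k) ^ (-(1:ℝ) / 2)) 0 := by
        apply ContinuousAt.rpow_const (by fun_prop)
        left; norm_num
      simpa using this.tendsto.mono_left nhdsWithin_le_nhds
    have t3 : Tendsto (fun k : ℝ => (k + (1 - k) / ν) ^ (-(ν + 1) / 2))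
        (nhdsWithin 0 (Ioo (0:ℝ) 1)) (nhds (((0:ℝ) + (1 - 0) / ν) ^ (-(ν + 1) / 2))) := by
      have : ContinuousAt (fun k : ℝ => (k + (1 - k) / ν) ^ (-(ν + 1) / 2)) 0 := by
        apply ContinuousAt.rpow_const (by fun_prop)
        left; positivity
      exact this.tendsto.mono_left nhdsWithin_le_nhds
    have tc : Tendsto (fun _ : ℝ => C) (nhdsWithin 0 (Ioo (0:ℝ) 1)) (nhds C) := tendsto_const_nhds
    have := ((tc.mul t1).mul t2).mul t3
    simpa using this
  · refine Tendsto.congr' (heq1.mono fun _ h => h.symm) ?_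
    have hsub : Tendsto (fun k : ℝ => 1 - k) (nhdsWithin 1 (Ioo (0:ℝ) 1))
        (nhdsWithin 0 (Ioi 0)) := by
      apply tendsto_nhdsWithin_of_tendsto_nhds_of_eventually_within
      · have h := Continuous.tendsto (by fun_prop : Continuous (fun k : ℝ => 1 - k)) 1
        simpa using h.mono_left nhdsWithin_le_nhds
      · exact eventually_mem_nhdsWithin.mono (fun k hk => by simp [Set.mem_Ioi]; linarith [hk.2])
    have tA : Tendsto (fun k : ℝ => (1 - k) ^ (-(1:ℝ) / 2)) (nhdsWithin 1 (Ioo (0:ℝ) 1)) atTop := by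
      have hpow : Tendsto (fun x : ℝ => x ^ ((1:ℝ) / 2)) (nhdsWithin 0 (Ioi 0))
          (nhdsWithin 0 (Ioi 0)) := by
        apply tendsto_nhdsWithin_of_tendsto_nhds_of_eventually_within
        · have := (Real.continuousAt_rpow_const 0 ((1:ℝ)/2) (Or.inr (by norm_num : (0:ℝ) ≤ 1/2))).tendsto
          rw [Real.zero_rpow (by norm_num)] at this
          exact this.mono_left nhdsWithin_le_nhds
        · exact eventually_mem_nhdsWithin.mono (fun x hx => Real.rpow_pos_of_pos hx _)
      have hinv : Tendsto (fun x : ℝ => (x ^ ((1:ℝ) / 2))⁻¹) (nhdsWithin 0 (Ioi 0)) atTop :=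
        hpow.inv_tendsto_nhdsGT_zero
      have := hinv.comp hsub
      refine this.congr' ?_
      refine eventually_mem_nhdsWithin.mono (fun k hk => ?_)
      have h1k : (0:ℝ) ≤ 1 - k := by linarith [hk.2]
      rw [Function.comp, ← Real.rpow_neg h1k]
      norm_num
    have tB : Tendsto (fun k : ℝ => C * k ^ ((ν - 2) / 2) * (k + (1 - k) / ν) ^ (-(ν + 1) / 2))
        (nhdsWithin 1 (Ioo (0:ℝ) 1)) (nhds (C * (1:ℝ) ^ ((ν - 2) / 2) *
          ((1:ℝ) + (1 - 1) / ν) ^ (-(ν + 1) / 2))) := by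
      have : ContinuousAt (fun k : ℝ => C * k ^ ((ν - 2) / 2) *
          (k + (1 - k) / ν) ^ (-(ν + 1) / 2)) 1 := by
        apply ContinuousAt.mul
        · exact continuousAt_const.mul (ContinuousAt.rpow_const continuousAt_id (Or.inl one_ne_zero))
        · apply ContinuousAt.rpow_const (by fun_prop)
          left; norm_num
      exact this.tendsto.mono_left nhdsWithin_le_nhds
    have hlim : C * (1:ℝ) ^ ((ν - 2) / 2) * ((1:ℝ) + (1 - 1) / ν) ^ (-(ν + 1) / 2) = C := by
      simp
    rw [hlim] at tB
    have := tA.atTop_mul_pos hCpos tB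
    exact this.congr (fun k => by ring)
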